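/- (Theorem 1) Every valid expression can be represented by a monotonic expression tree: for every read-once expression tree T over Fin n there exists a monotonic read-once expression tree T' whose set of leaf variables equals that of T and such that val T' = val T. -/
import Mathlib


/-- The four binary arithmetic operations labeling internal nodes. -/
inductive Op : Type
  | add | sub | mul | div
deriving DecidableEq, Repr

/-- An expression tree over variables `Fin n`: a full binary tree whose leaves
are labeled by variables and whose internal nodes carry an operation. -/
inductive ETree (n : ℕ) : Type
  | leaf (v : Fin n)
  | node (op : Op) (l r : ETree n)
deriving DecidableEq

/-- The field of rational functions in `n` variables over `ℚ`. -/
abbrev K (n : ℕ) := FractionRing (MvPolynomial (Fin n) ℚ)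

/-- The list of variables labeling the leaves, from left to right. -/
def leafList {n : ℕ} : ETree n → List (Fin n)
  | .leaf v => [v]
  | .node _ l r => leafList l ++ leafList r

/-- A tree is read-once (a *valid* expression) if each variable labels at most one leaf. -/
def ReadOnce {n : ℕ} (T : ETree n) : Prop := (leafList T).Nodup

/-- The set of variables labeling leaves of a tree. -/
def leafVars {n : ℕ} (T : ETree n) : Finset (Fin n) := (leafList T).toFinset

/-- The value of an expression tree in the field of rational functions. -/
noncomputable def val {n : ℕ} : ETree n → K n
  | .leaf v => algebraMap (MvPolynomial (Fin n) ℚ) (K n) (MvPolynomial.X v)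
  | .node .add l r => val l + val r
  | .node .sub l r => val l - val r
  | .node .mul l r => val l * val r
  | .node .div l r => val l / val r

/-- `AllowedEdge p c` holds when an internal node labeled `c` may be a child of an
internal node labeled `p` in a monotonic tree: a subtraction node may not be the child
of an addition or subtraction node, and a division node may not be the child of a
multiplication or division node. -/
def AllowedEdge : Op → Op → Prop
  | Op.add, Op.sub => False
  | Op.sub, Op.sub => False
  | Op.mul, Op.div => False
  | Op.div, Op.div => False
  | _, _ => True

/-- A tree is monotonic if every parent–child pair of internal nodes is an allowed edge:
adjacent `+`/`−` nodes have the `−` as parent, adjacent `×`/`÷` nodes have the `÷` as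
parent, and no two `−` (resp. `÷`) nodes are adjacent. -/
inductive Monotonic {n : ℕ} : ETree n → Prop
  | leaf (v : Fin n) : Monotonic (.leaf v)
  | node (op : Op) (l r : ETree n) :
      Monotonic l → Monotonic r →
      (∀ (cop : Op) (cl cr : ETree n), l = .node cop cl cr → AllowedEdge op cop) →
      (∀ (cop : Op) (cl cr : ETree n), r = .node cop cl cr → AllowedEdge op cop) →
      Monotonic (.node op l r)

section MonoAux

variable {n : ℕ}

private lemma edge_known {op cop : Op} {cl cr : ETree n} (h : AllowedEdge op cop) :
    ∀ (cop' : Op) (cl' cr' : ETree n),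
      ETree.node cop cl cr = ETree.node cop' cl' cr' → AllowedEdge op cop' := by
  intro cop' cl' cr' heq
  injection heq with h1 h2 h3
  subst h1; exact h

private lemma edgeA {T : ETree n} (h : ∀ a b : ETree n, T ≠ ETree.node Op.sub a b)
    {op : Op} (hop : op = Op.add ∨ op = Op.sub) :
    ∀ (cop : Op) (cl cr : ETree n), T = ETree.node cop cl cr → AllowedEdge op cop := by
  rintro cop cl cr rfl
  cases cop <;> rcases hop with rfl | rfl <;>
    first | trivial | exact absurd rfl (h _ _)

private lemma edgeM {T : ETree n} (h : ∀ a b : ETree n, T ≠ ETree.node Op.div a b)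
    {op : Op} (hop : op = Op.mul ∨ op = Op.div) :
    ∀ (cop : Op) (cl cr : ETree n), T = ETree.node cop cl cr → AllowedEdge op cop := by
  rintro cop cl cr rfl
  cases cop <;> rcases hop with rfl | rfl <;>
    first | trivial | exact absurd rfl (h _ _)

private lemma combine (op : Op) (T₁ T₂ : ETree n) (h1 : Monotonic T₁) (h2 : Monotonic T₂) :
    ∃ T', Monotonic T' ∧ (leafList T').Perm (leafList T₁ ++ leafList T₂) ∧
      val T' = val (ETree.node op T₁ T₂) := by
  cases op with
  | add =>
    by_cases e1 : ∃ a b : ETree n, T₁ = ETree.node Op.sub a b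
    · obtain ⟨a, b, rfl⟩ := e1
      rcases h1 with _ | ⟨_, _, _, ha, hb, ea, eb⟩
      have nsa : ∀ x y : ETree n, a ≠ ETree.node Op.sub x y := fun x y hxy => ea Op.sub x y hxy
      have nsb : ∀ x y : ETree n, b ≠ ETree.node Op.sub x y := fun x y hxy => eb Op.sub x y hxy
      by_cases e2 : ∃ c d : ETree n, T₂ = ETree.node Op.sub c d
      · obtain ⟨c, d, rfl⟩ := e2
        rcases h2 with _ | ⟨_, _, _, hc, hd, ec, ed⟩
        have nsc : ∀ x y : ETree n, c ≠ ETree.node Op.sub x y := fun x y hxy => ec Op.sub x y hxy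
        have nsd : ∀ x y : ETree n, d ≠ ETree.node Op.sub x y := fun x y hxy => ed Op.sub x y hxy
        refine ⟨ETree.node Op.sub (ETree.node Op.add a c) (ETree.node Op.add b d), ?_, ?_, ?_⟩
        · exact Monotonic.node _ _ _
            (Monotonic.node _ _ _ ha hc (edgeA nsa (Or.inl rfl)) (edgeA nsc (Or.inl rfl)))
            (Monotonic.node _ _ _ hb hd (edgeA nsb (Or.inl rfl)) (edgeA nsd (Or.inl rfl)))
            (edge_known trivial) (edge_known trivial)
        · refine List.perm_iff_count.mpr fun x => ?_
          simp [leafList, List.count_append]; try ring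
        · simp only [val]; ring
      · have ns2 : ∀ x y : ETree n, T₂ ≠ ETree.node Op.sub x y := fun x y hxy => e2 ⟨x, y, hxy⟩
        refine ⟨ETree.node Op.sub (ETree.node Op.add a T₂) b, ?_, ?_, ?_⟩
        · exact Monotonic.node _ _ _
            (Monotonic.node _ _ _ ha h2 (edgeA nsa (Or.inl rfl)) (edgeA ns2 (Or.inl rfl)))
            hb (edge_known trivial) (edgeA nsb (Or.inr rfl))
        · refine List.perm_iff_count.mpr fun x => ?_
          simp [leafList, List.count_append]; try ring
        · simp only [val]; ring
    · have ns1 : ∀ x y : ETree n, T₁ ≠ ETree.node Op.sub x y := fun x y hxy => e1 ⟨x, y, hxy⟩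
      by_cases e2 : ∃ c d : ETree n, T₂ = ETree.node Op.sub c d
      · obtain ⟨c, d, rfl⟩ := e2
        rcases h2 with _ | ⟨_, _, _, hc, hd, ec, ed⟩
        have nsc : ∀ x y : ETree n, c ≠ ETree.node Op.sub x y := fun x y hxy => ec Op.sub x y hxy
        have nsd : ∀ x y : ETree n, d ≠ ETree.node Op.sub x y := fun x y hxy => ed Op.sub x y hxy
        refine ⟨ETree.node Op.sub (ETree.node Op.add T₁ c) d, ?_, ?_, ?_⟩
        · exact Monotonic.node _ _ _
            (Monotonic.node _ _ _ h1 hc (edgeA ns1 (Or.inl rfl)) (edgeA nsc (Or.inl rfl)))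
            hd (edge_known trivial) (edgeA nsd (Or.inr rfl))
        · refine List.perm_iff_count.mpr fun x => ?_
          simp [leafList, List.count_append]; try ring
        · simp only [val]; ring
      · have ns2 : ∀ x y : ETree n, T₂ ≠ ETree.node Op.sub x y := fun x y hxy => e2 ⟨x, y, hxy⟩
        exact ⟨ETree.node Op.add T₁ T₂,
          Monotonic.node _ _ _ h1 h2 (edgeA ns1 (Or.inl rfl)) (edgeA ns2 (Or.inl rfl)),
          List.Perm.refl _, rfl⟩
  | sub =>
    by_cases e1 : ∃ a b : ETree n, T₁ = ETree.node Op.sub a b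
    · obtain ⟨a, b, rfl⟩ := e1
      rcases h1 with _ | ⟨_, _, _, ha, hb, ea, eb⟩
      have nsa : ∀ x y : ETree n, a ≠ ETree.node Op.sub x y := fun x y hxy => ea Op.sub x y hxy
      have nsb : ∀ x y : ETree n, b ≠ ETree.node Op.sub x y := fun x y hxy => eb Op.sub x y hxy
      by_cases e2 : ∃ c d : ETree n, T₂ = ETree.node Op.sub c d
      · obtain ⟨c, d, rfl⟩ := e2
        rcases h2 with _ | ⟨_, _, _, hc, hd, ec, ed⟩
        have nsc : ∀ x y : ETree n, c ≠ ETree.node Op.sub x y := fun x y hxy => ec Op.sub x y hxy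
        have nsd : ∀ x y : ETree n, d ≠ ETree.node Op.sub x y := fun x y hxy => ed Op.sub x y hxy
        refine ⟨ETree.node Op.sub (ETree.node Op.add a d) (ETree.node Op.add b c), ?_, ?_, ?_⟩
        · exact Monotonic.node _ _ _
            (Monotonic.node _ _ _ ha hd (edgeA nsa (Or.inl rfl)) (edgeA nsd (Or.inl rfl)))
            (Monotonic.node _ _ _ hb hc (edgeA nsb (Or.inl rfl)) (edgeA nsc (Or.inl rfl)))
            (edge_known trivial) (edge_known trivial)
        · refine List.perm_iff_count.mpr fun x => ?_
          simp [leafList, List.count_append]; try ring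
        · simp only [val]; ring
      · have ns2 : ∀ x y : ETree n, T₂ ≠ ETree.node Op.sub x y := fun x y hxy => e2 ⟨x, y, hxy⟩
        refine ⟨ETree.node Op.sub a (ETree.node Op.add b T₂), ?_, ?_, ?_⟩
        · exact Monotonic.node _ _ _ ha
            (Monotonic.node _ _ _ hb h2 (edgeA nsb (Or.inl rfl)) (edgeA ns2 (Or.inl rfl)))
            (edgeA nsa (Or.inr rfl)) (edge_known trivial)
        · refine List.perm_iff_count.mpr fun x => ?_
          simp [leafList, List.count_append]; try ring
        · simp only [val]; ring
    · have ns1 : ∀ x y : ETree n, T₁ ≠ ETree.node Op.sub x y := fun x y hxy => e1 ⟨x, y, hxy⟩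
      by_cases e2 : ∃ c d : ETree n, T₂ = ETree.node Op.sub c d
      · obtain ⟨c, d, rfl⟩ := e2
        rcases h2 with _ | ⟨_, _, _, hc, hd, ec, ed⟩
        have nsc : ∀ x y : ETree n, c ≠ ETree.node Op.sub x y := fun x y hxy => ec Op.sub x y hxy
        have nsd : ∀ x y : ETree n, d ≠ ETree.node Op.sub x y := fun x y hxy => ed Op.sub x y hxy
        refine ⟨ETree.node Op.sub (ETree.node Op.add T₁ d) c, ?_, ?_, ?_⟩
        · exact Monotonic.node _ _ _
            (Monotonic.node _ _ _ h1 hd (edgeA ns1 (Or.inl rfl)) (edgeA nsd (Or.inl rfl)))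
            hc (edge_known trivial) (edgeA nsc (Or.inr rfl))
        · refine List.perm_iff_count.mpr fun x => ?_
          simp [leafList, List.count_append]; try ring
        · simp only [val]; ring
      · have ns2 : ∀ x y : ETree n, T₂ ≠ ETree.node Op.sub x y := fun x y hxy => e2 ⟨x, y, hxy⟩
        exact ⟨ETree.node Op.sub T₁ T₂,
          Monotonic.node _ _ _ h1 h2 (edgeA ns1 (Or.inr rfl)) (edgeA ns2 (Or.inr rfl)),
          List.Perm.refl _, rfl⟩
  | mul =>
    by_cases e1 : ∃ a b : ETree n, T₁ = ETree.node Op.div a b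
    · obtain ⟨a, b, rfl⟩ := e1
      rcases h1 with _ | ⟨_, _, _, ha, hb, ea, eb⟩
      have nda : ∀ x y : ETree n, a ≠ ETree.node Op.div x y := fun x y hxy => ea Op.div x y hxy
      have ndb : ∀ x y : ETree n, b ≠ ETree.node Op.div x y := fun x y hxy => eb Op.div x y hxy
      by_cases e2 : ∃ c d : ETree n, T₂ = ETree.node Op.div c d
      · obtain ⟨c, d, rfl⟩ := e2
        rcases h2 with _ | ⟨_, _, _, hc, hd, ec, ed⟩
        have ndc : ∀ x y : ETree n, c ≠ ETree.node Op.div x y := fun x y hxy => ec Op.div x y hxy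
        have ndd : ∀ x y : ETree n, d ≠ ETree.node Op.div x y := fun x y hxy => ed Op.div x y hxy
        refine ⟨ETree.node Op.div (ETree.node Op.mul a c) (ETree.node Op.mul b d), ?_, ?_, ?_⟩
        · exact Monotonic.node _ _ _
            (Monotonic.node _ _ _ ha hc (edgeM nda (Or.inl rfl)) (edgeM ndc (Or.inl rfl)))
            (Monotonic.node _ _ _ hb hd (edgeM ndb (Or.inl rfl)) (edgeM ndd (Or.inl rfl)))
            (edge_known trivial) (edge_known trivial)
        · refine List.perm_iff_count.mpr fun x => ?_
          simp [leafList, List.count_append]; try ring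
        · simp only [val]; rw [div_mul_div_comm]
      · have nd2 : ∀ x y : ETree n, T₂ ≠ ETree.node Op.div x y := fun x y hxy => e2 ⟨x, y, hxy⟩
        refine ⟨ETree.node Op.div (ETree.node Op.mul a T₂) b, ?_, ?_, ?_⟩
        · exact Monotonic.node _ _ _
            (Monotonic.node _ _ _ ha h2 (edgeM nda (Or.inl rfl)) (edgeM nd2 (Or.inl rfl)))
            hb (edge_known trivial) (edgeM ndb (Or.inr rfl))
        · refine List.perm_iff_count.mpr fun x => ?_
          simp [leafList, List.count_append]; try ring
        · simp only [val]; rw [div_mul_eq_mul_div]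
    · have nd1 : ∀ x y : ETree n, T₁ ≠ ETree.node Op.div x y := fun x y hxy => e1 ⟨x, y, hxy⟩
      by_cases e2 : ∃ c d : ETree n, T₂ = ETree.node Op.div c d
      · obtain ⟨c, d, rfl⟩ := e2
        rcases h2 with _ | ⟨_, _, _, hc, hd, ec, ed⟩
        have ndc : ∀ x y : ETree n, c ≠ ETree.node Op.div x y := fun x y hxy => ec Op.div x y hxy
        have ndd : ∀ x y : ETree n, d ≠ ETree.node Op.div x y := fun x y hxy => ed Op.div x y hxy
        refine ⟨ETree.node Op.div (ETree.node Op.mul T₁ c) d, ?_, ?_, ?_⟩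
        · exact Monotonic.node _ _ _
            (Monotonic.node _ _ _ h1 hc (edgeM nd1 (Or.inl rfl)) (edgeM ndc (Or.inl rfl)))
            hd (edge_known trivial) (edgeM ndd (Or.inr rfl))
        · refine List.perm_iff_count.mpr fun x => ?_
          simp [leafList, List.count_append]; try ring
        · simp only [val]; rw [mul_div_assoc]
      · have nd2 : ∀ x y : ETree n, T₂ ≠ ETree.node Op.div x y := fun x y hxy => e2 ⟨x, y, hxy⟩
        exact ⟨ETree.node Op.mul T₁ T₂,
          Monotonic.node _ _ _ h1 h2 (edgeM nd1 (Or.inl rfl)) (edgeM nd2 (Or.inl rfl)),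
          List.Perm.refl _, rfl⟩
  | div =>
    by_cases e1 : ∃ a b : ETree n, T₁ = ETree.node Op.div a b
    · obtain ⟨a, b, rfl⟩ := e1
      rcases h1 with _ | ⟨_, _, _, ha, hb, ea, eb⟩
      have nda : ∀ x y : ETree n, a ≠ ETree.node Op.div x y := fun x y hxy => ea Op.div x y hxy
      have ndb : ∀ x y : ETree n, b ≠ ETree.node Op.div x y := fun x y hxy => eb Op.div x y hxy
      by_cases e2 : ∃ c d : ETree n, T₂ = ETree.node Op.div c d
      · obtain ⟨c, d, rfl⟩ := e2
        rcases h2 with _ | ⟨_, _, _, hc, hd, ec, ed⟩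
        have ndc : ∀ x y : ETree n, c ≠ ETree.node Op.div x y := fun x y hxy => ec Op.div x y hxy
        have ndd : ∀ x y : ETree n, d ≠ ETree.node Op.div x y := fun x y hxy => ed Op.div x y hxy
        refine ⟨ETree.node Op.div (ETree.node Op.mul a d) (ETree.node Op.mul b c), ?_, ?_, ?_⟩
        · exact Monotonic.node _ _ _
            (Monotonic.node _ _ _ ha hd (edgeM nda (Or.inl rfl)) (edgeM ndd (Or.inl rfl)))
            (Monotonic.node _ _ _ hb hc (edgeM ndb (Or.inl rfl)) (edgeM ndc (Or.inl rfl)))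
            (edge_known trivial) (edge_known trivial)
        · refine List.perm_iff_count.mpr fun x => ?_
          simp [leafList, List.count_append]; try ring
        · simp only [val]; rw [div_div_eq_mul_div, div_mul_eq_mul_div, div_div]
      · have nd2 : ∀ x y : ETree n, T₂ ≠ ETree.node Op.div x y := fun x y hxy => e2 ⟨x, y, hxy⟩
        refine ⟨ETree.node Op.div a (ETree.node Op.mul b T₂), ?_, ?_, ?_⟩
        · exact Monotonic.node _ _ _ ha
            (Monotonic.node _ _ _ hb h2 (edgeM ndb (Or.inl rfl)) (edgeM nd2 (Or.inl rfl)))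
            (edgeM nda (Or.inr rfl)) (edge_known trivial)
        · refine List.perm_iff_count.mpr fun x => ?_
          simp [leafList, List.count_append]; try ring
        · simp only [val]; rw [div_div]
    · have nd1 : ∀ x y : ETree n, T₁ ≠ ETree.node Op.div x y := fun x y hxy => e1 ⟨x, y, hxy⟩
      by_cases e2 : ∃ c d : ETree n, T₂ = ETree.node Op.div c d
      · obtain ⟨c, d, rfl⟩ := e2
        rcases h2 with _ | ⟨_, _, _, hc, hd, ec, ed⟩
        have ndc : ∀ x y : ETree n, c ≠ ETree.node Op.div x y := fun x y hxy => ec Op.div x y hxy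
        have ndd : ∀ x y : ETree n, d ≠ ETree.node Op.div x y := fun x y hxy => ed Op.div x y hxy
        refine ⟨ETree.node Op.div (ETree.node Op.mul T₁ d) c, ?_, ?_, ?_⟩
        · exact Monotonic.node _ _ _
            (Monotonic.node _ _ _ h1 hd (edgeM nd1 (Or.inl rfl)) (edgeM ndd (Or.inl rfl)))
            hc (edge_known trivial) (edgeM ndc (Or.inr rfl))
        · refine List.perm_iff_count.mpr fun x => ?_
          simp [leafList, List.count_append]; try ring
        · simp only [val]; rw [div_div_eq_mul_div]
      · have nd2 : ∀ x y : ETree n, T₂ ≠ ETree.node Op.div x y := fun x y hxy => e2 ⟨x, y, hxy⟩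
        exact ⟨ETree.node Op.div T₁ T₂,
          Monotonic.node _ _ _ h1 h2 (edgeM nd1 (Or.inr rfl)) (edgeM nd2 (Or.inr rfl)),
          List.Perm.refl _, rfl⟩

private lemma key (T : ETree n) :
    ∃ T', Monotonic T' ∧ (leafList T').Perm (leafList T) ∧ val T' = val T := by
  induction T with
  | leaf v => exact ⟨.leaf v, Monotonic.leaf v, List.Perm.refl _, rfl⟩
  | node op l r ihl ihr =>
    obtain ⟨L, hL, pL, vL⟩ := ihl
    obtain ⟨R, hR, pR, vR⟩ := ihr
    obtain ⟨T', hT', pT', vT'⟩ := combine op L R hL hR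
    refine ⟨T', hT', ?_, ?_⟩
    · simpa [leafList] using pT'.trans (pL.append pR)
    · rw [vT']; cases op <;> simp only [val, vL, vR]

end MonoAux

/-- Theorem 1: every valid (read-once) expression can be represented by a monotonic
expression tree over the same variables with the same value. -/
theorem exists_monotonic_tree (n : ℕ) (T : ETree n) (hT : ReadOnce T) :
    ∃ T' : ETree n, ReadOnce T' ∧ Monotonic T' ∧
      leafVars T' = leafVars T ∧ val T' = val T := by
  obtain ⟨T', hM, hper, hval⟩ := key T
  exact ⟨T', hper.nodup_iff.mpr hT, hM, List.toFinset_eq_of_perm _ _ hper, hval⟩
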